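/- arXiv:1112.3805 — 7 statements merged into one kernel-verified Lean document; each statement's English description precedes it below -/
import Mathlib

section
/- Every positive cone with strong unit satisfies the cancellation law: if x + y = x + z then y = z. -/
/-- A positive cone with strong unit: a commutative monoid with an `ℝ≥0`-scalar action
and a distinguished strong unit `u`. -/
structure ConeUnit (M : Type*) [AddCommMonoid M] where
  smul : NNReal → M → M
  unit : M
  one_smul : ∀ x : M, smul 1 x = x
  add_smul : ∀ (r s : NNReal) (x : M), smul (r + s) x = smul r x + smul s x
  mul_smul : ∀ (r s : NNReal) (x : M), smul (r * s) x = smul r (smul s x)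
  smul_add : ∀ (r : NNReal) (x y : M), smul r (x + y) = smul r x + smul r y
  add_eq_zero : ∀ x y : M, x + y = 0 → x = 0 ∧ y = 0
  unit_cancel : ∀ x y z : M, x + y = unit → x + z = unit → y = z
  strong : ∀ x : M, ∃ (n : ℕ) (z : M), x + z = smul (n : NNReal) unit

/-- Key lemma: complements with respect to `r • u` (`r ≠ 0`) are unique. -/
theorem coneUnit_smul_cancel {M : Type*} [AddCommMonoid M] (c : ConeUnit M)
    (r : NNReal) (hr : r ≠ 0) (x y z : M)
    (hy : x + y = c.smul r c.unit) (hz : x + z = c.smul r c.unit) : y = z := by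
  have key : ∀ w : M, x + w = c.smul r c.unit →
      c.smul r⁻¹ x + c.smul r⁻¹ w = c.unit := by
    intro w hw
    have := congrArg (c.smul r⁻¹) hw
    rw [c.smul_add] at this
    rw [this, ← c.mul_smul, inv_mul_cancel₀ hr, c.one_smul]
  have h := c.unit_cancel _ _ _ (key y hy) (key z hz)
  have := congrArg (c.smul r) h
  rwa [← c.mul_smul, ← c.mul_smul, mul_inv_cancel₀ hr, c.one_smul, c.one_smul] at this

/-- Every positive cone with strong unit satisfies the cancellation law. -/
theorem coneUnit_cancel {M : Type*} [AddCommMonoid M] (c : ConeUnit M) :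
    ∀ x y z : M, x + y = x + z → y = z := by
  intro x y z h
  -- first cancel x, at the cost of adding a common element
  obtain ⟨n, s, hs⟩ := c.strong (x + z)
  have hsum : ∀ w : M, x + w = x + z →
      x + (w + (s + c.unit)) = c.smul ((n : NNReal) + 1) c.unit := by
    intro w hw
    rw [c.add_smul, c.one_smul, ← hs]
    rw [show x + (w + (s + c.unit)) = (x + w) + s + c.unit by abel, hw]
  have h1 : y + (s + c.unit) = z + (s + c.unit) :=
    coneUnit_smul_cancel c _ (by positivity) x _ _ (hsum y h) (hsum z rfl)
  -- now cancel (s + c.unit)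
  set d := s + c.unit with hd
  obtain ⟨m, t, ht⟩ := c.strong (y + d)
  have h2 : ∀ w : M, w + d = y + d →
      (d + (t + c.unit)) + w = c.smul ((m : NNReal) + 1) c.unit := by
    intro w hw
    rw [c.add_smul, c.one_smul, ← ht]
    rw [show (d + (t + c.unit)) + w = (w + d) + t + c.unit by abel, hw]
  exact coneUnit_smul_cancel c _ (by positivity) _ _ _ (h2 y rfl) (h2 z h1.symm)
end

section
/- A [0,1]-valued finitely additive 'state' on functions is automatically 1-Lipschitz: if h : ([0,1]^X) → [0,1] satisfies h(1) = 1, h(p ⊎ q) = h(p) + h(q) whenever p + q ≤ 1 pointwise, and h(r·p) = r·h(p) for scalars r ∈ [0,1], then |h(p) − h(q)| ≤ sup_x |p(x) − q(x)| for all p, q : X → [0,1]. -/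
/-- A state on the fuzzy predicates `[0,1]^X`: a `[0,1]`-valued functional preserving
the constant `1`, partial sums, and `[0,1]`-scalar multiplication. -/
structure IsState {α : Type*} (h : (α → ℝ) → ℝ) : Prop where
  map_one : h (fun _ => 1) = 1
  mem : ∀ p : α → ℝ, (∀ x, p x ∈ Set.Icc (0:ℝ) 1) → h p ∈ Set.Icc (0:ℝ) 1
  add : ∀ p q : α → ℝ, (∀ x, p x ∈ Set.Icc (0:ℝ) 1) → (∀ x, q x ∈ Set.Icc (0:ℝ) 1) →
    (∀ x, p x + q x ≤ 1) → h (fun x => p x + q x) = h p + h q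
  smul : ∀ (r : ℝ) (p : α → ℝ), r ∈ Set.Icc (0:ℝ) 1 → (∀ x, p x ∈ Set.Icc (0:ℝ) 1) →
    h (fun x => r * p x) = r * h p

lemma IsState.mono {α : Type*} {h : (α → ℝ) → ℝ} (hh : IsState h)
    (p q : α → ℝ) (hp : ∀ x, p x ∈ Set.Icc (0:ℝ) 1) (hq : ∀ x, q x ∈ Set.Icc (0:ℝ) 1)
    (hle : ∀ x, p x ≤ q x) : h p ≤ h q := by
  have hd : ∀ x, (fun x => q x - p x) x ∈ Set.Icc (0:ℝ) 1 := fun x => by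
    have h1 := (hp x).1; have h2 := (hq x).2
    exact ⟨by show (0:ℝ) ≤ q x - p x; linarith [hle x], by show q x - p x ≤ 1; linarith⟩
  have := hh.add p (fun x => q x - p x) hp hd (fun x => by
    have := (hq x).2; show p x + (q x - p x) ≤ 1; linarith)
  have heq : (fun x => p x + (q x - p x)) = q := by funext x; ring
  rw [heq] at this
  have := (hh.mem (fun x => q x - p x) hd).1
  linarith

/-- A state on `[0,1]^X` is automatically 1-Lipschitz (nonexpansive) for the
supremum metric: `|h p − h q| ≤ sup_x |p x − q x|`. -/
theorem state_nonexpansive {X : Type*} (h : (X → ℝ) → ℝ) (hh : IsState h)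
    (p q : X → ℝ) (hp : ∀ x, p x ∈ Set.Icc (0:ℝ) 1) (hq : ∀ x, q x ∈ Set.Icc (0:ℝ) 1) :
    |h p - h q| ≤ ⨆ x, |p x - q x| := by
  cases isEmpty_or_nonempty X with
  | inl hE =>
    have : p = q := funext fun x => (hE.false x).elim
    subst this
    simp
  | inr hN =>
    set ε := ⨆ x, |p x - q x| with hεdef
    have hb : BddAbove (Set.range fun x => |p x - q x|) := by
      refine ⟨2, ?_⟩
      rintro _ ⟨x, rfl⟩
      have := (hp x).1; have := (hp x).2; have := (hq x).1; have := (hq x).2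
      simp only [abs_le]; constructor <;> linarith
    have hεx : ∀ x, |p x - q x| ≤ ε := fun x => le_ciSup hb x
    have hε0 : 0 ≤ ε := le_trans (abs_nonneg _) (hεx (Classical.arbitrary X))
    have key : ∀ p q : X → ℝ, (∀ x, p x ∈ Set.Icc (0:ℝ) 1) → (∀ x, q x ∈ Set.Icc (0:ℝ) 1) →
        (∀ x, p x - q x ≤ ε) → h p - h q ≤ ε := by
      intro p q hp hq hle
      set r : ℝ := 1 / (1 + ε) with hrdef
      have hpos : (0:ℝ) < 1 + ε := by linarith
      have hr1 : r * (1 + ε) = 1 := by rw [hrdef]; field_simp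
      have hr0 : 0 < r := by positivity
      have hrle : r ≤ 1 := by nlinarith
      have hrε : r * ε ∈ Set.Icc (0:ℝ) 1 := ⟨by positivity, by nlinarith⟩
      have hA : h (fun x => r * p x) = r * h p :=
        hh.smul r p ⟨le_of_lt hr0, hrle⟩ hp
      have hqr : ∀ x, (fun x => r * q x) x ∈ Set.Icc (0:ℝ) 1 := fun x => by
        have := (hq x).1; have := (hq x).2
        exact ⟨by positivity, by show r * q x ≤ 1; nlinarith⟩
      have hB : h (fun x => r * q x + r * ε) = r * h q + r * ε := by
        have hadd := hh.add (fun x => r * q x) (fun _ => r * ε) hqr (fun _ => hrε)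
          (fun x => by have := (hq x).2; show r * q x + r * ε ≤ 1; nlinarith)
        have hc : h (fun _ : X => r * ε) = r * ε := by
          have := hh.smul (r * ε) (fun _ => 1) hrε (fun _ => by norm_num)
          simpa [hh.map_one] using this
        rw [hadd, hc, hh.smul r q ⟨le_of_lt hr0, hrle⟩ hq]
      have hm : h (fun x => r * p x) ≤ h (fun x => r * q x + r * ε) := by
        refine hh.mono _ _ (fun x => ?_) (fun x => ?_) (fun x => ?_)
        · have := (hp x).1; have := (hp x).2
          exact ⟨by positivity, by show r * p x ≤ 1; nlinarith⟩
        · have := (hq x).1; have := (hq x).2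
          exact ⟨by positivity, by show r * q x + r * ε ≤ 1; nlinarith⟩
        · show r * p x ≤ r * q x + r * ε
          have := hle x; nlinarith
      rw [hA, hB] at hm
      have h1 := (hh.mem p hp).1
      have h2 := (hh.mem q hq).1
      nlinarith
    rw [abs_sub_le_iff]
    constructor
    · exact key p q hp hq (fun x => le_trans (le_abs_self _) (hεx x))
    · exact key q p hq hp
        (fun x => le_trans (le_abs_self _) (le_of_eq_of_le (abs_sub_comm _ _) (hεx x)))
end

section
/- States on fuzzy predicates correspond to finitely additive measures: for a set X, the map Φ sending a state h : ([0,1]^X) → [0,1] (preserving 1, partial sums, and [0,1]-scalar multiplication) to the set function U ↦ h(𝟙_U) on 𝒫(X) is a bijection onto the finitely additive [0,1]-valued measures m on 𝒫(X) with m(X) = 1. -/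
def IsFinAddMeasure {X : Type*} (m : Set X → ℝ) : Prop :=
  m Set.univ = 1 ∧ (∀ U : Set X, m U ∈ Set.Icc (0:ℝ) 1) ∧
  ∀ U V : Set X, Disjoint U V → m (U ∪ V) = m U + m V

open Filter Topology Set

theorem tendsto_inv_two_pow_atTop : Tendsto (fun n : ℕ => ((2:ℝ) ^ n)⁻¹) atTop (𝓝 0) :=
  tendsto_inv_atTop_zero.comp (tendsto_pow_atTop_atTop_of_one_lt one_lt_two)

structure IsAdditiveState {α : Type*} (h : (α → ℝ) → ℝ) : Prop where
  map_one : h (fun _ => 1) = 1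
  mem : ∀ p : α → ℝ, (∀ x, p x ∈ Icc (0:ℝ) 1) → h p ∈ Icc (0:ℝ) 1
  add : ∀ p q : α → ℝ, (∀ x, p x ∈ Icc (0:ℝ) 1) → (∀ x, q x ∈ Icc (0:ℝ) 1) →
    (∀ x, p x + q x ≤ 1) → h (fun x => p x + q x) = h p + h q

theorem IsState.isAdditiveState {α : Type*} {h : (α → ℝ) → ℝ} (hs : IsState h) :
    IsAdditiveState h :=
  ⟨hs.map_one, hs.mem, hs.add⟩

namespace IsAdditiveState

variable {α : Type*} {h : (α → ℝ) → ℝ} {p q : α → ℝ}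

theorem map_zero (hs : IsAdditiveState h) : h (fun _ => 0) = 0 := by
  have h0 : ∀ _ : α, (0:ℝ) ∈ Icc (0:ℝ) 1 := fun _ => left_mem_Icc.2 zero_le_one
  have := hs.add _ _ h0 h0 (fun _ => by norm_num)
  simp only [add_zero] at this
  linarith

theorem mono (hs : IsAdditiveState h) (hp : ∀ x, p x ∈ Icc (0:ℝ) 1)
    (hq : ∀ x, q x ∈ Icc (0:ℝ) 1) (hpq : ∀ x, p x ≤ q x) : h p ≤ h q := by
  have hd : ∀ x, q x - p x ∈ Icc (0:ℝ) 1 := fun x =>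
    ⟨sub_nonneg.2 (hpq x), by linarith [(hp x).1, (hq x).2]⟩
  have hsplit := hs.add p _ hp hd (fun x => by linarith [(hq x).2])
  simp only [add_sub_cancel] at hsplit
  linarith [(hs.mem _ hd).1]

theorem map_natCast_mul (hs : IsAdditiveState h) (hq : ∀ x, 0 ≤ q x) (k : ℕ)
    (hk : ∀ x, k * q x ≤ 1) : h (fun x => k * q x) = k * h q := by
  induction k with
  | zero => simpa using hs.map_zero
  | succ k ih =>
    push_cast at hk ⊢
    have hkq : ∀ x, (k:ℝ) * q x ∈ Icc (0:ℝ) 1 := fun x =>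
      ⟨mul_nonneg k.cast_nonneg (hq x), by linarith [hk x, hq x]⟩
    have hq1 : ∀ x, q x ∈ Icc (0:ℝ) 1 := fun x => ⟨hq x, by linarith [hk x, (hkq x).1]⟩
    have hsum := hs.add _ _ hkq hq1 (fun x => by linarith [hk x])
    simp only [← add_one_mul] at hsum
    rw [hsum, ih fun x => (hkq x).2]
    ring

theorem mul_le_map_mul (hs : IsAdditiveState h) (hp : ∀ x, p x ∈ Icc (0:ℝ) 1) {r : ℝ}
    (hr : r ∈ Icc (0:ℝ) 1) : r * h p ≤ h (fun x => r * p x) := by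
  have hp01 := hs.mem p hp
  have approx : ∀ n : ℕ, r * h p - ((2:ℝ) ^ n)⁻¹ ≤ h (fun x => r * p x) := by
    intro n
    set ε : ℝ := ((2:ℝ) ^ n)⁻¹
    have hε : 0 < ε := by positivity
    set q : α → ℝ := fun x => ε * p x
    have hq : ∀ x, 0 ≤ q x := fun x => mul_nonneg hε.le (hp x).1
    have hq_eq : h q = ε * h p := by
      have h2q : (fun x => ((2 ^ n : ℕ) : ℝ) * q x) = p := by
        funext x; simp [q, ε]
      have := hs.map_natCast_mul hq (2 ^ n) fun x => by rw [congrFun h2q x]; exact (hp x).2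
      rw [h2q] at this
      simp only [this, ε, Nat.cast_pow, Nat.cast_ofNat]
      field_simp
    set k := ⌊r / ε⌋₊
    have hk_le : k * ε ≤ r := (le_div_iff₀ hε).1 (Nat.floor_le (div_nonneg hr.1 hε.le))
    have hk_gt : r - ε < k * ε := by
      have := (div_lt_iff₀ hε).1 (Nat.lt_floor_add_one (r / ε))
      linarith
    have hkq_le : ∀ x, k * q x ≤ r * p x := fun x => by
      simp only [q, ← mul_assoc]
      exact mul_le_mul_of_nonneg_right hk_le (hp x).1
    have hrp : ∀ x, r * p x ∈ Icc (0:ℝ) 1 := fun x =>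
      ⟨mul_nonneg hr.1 (hp x).1, mul_le_one₀ hr.2 (hp x).1 (hp x).2⟩
    have hkq : ∀ x, k * q x ∈ Icc (0:ℝ) 1 := fun x =>
      ⟨mul_nonneg k.cast_nonneg (hq x), (hkq_le x).trans (hrp x).2⟩
    calc r * h p - ε ≤ (r - ε) * h p := by nlinarith [hp01.2]
      _ ≤ k * h q := by rw [hq_eq, ← mul_assoc]; exact mul_le_mul_of_nonneg_right hk_gt.le hp01.1
      _ = h (fun x => k * q x) := (hs.map_natCast_mul hq k fun x => (hkq x).2).symm
      _ ≤ h (fun x => r * p x) := hs.mono hkq hrp hkq_le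
  exact le_of_tendsto' (by simpa using tendsto_const_nhds.sub tendsto_inv_two_pow_atTop) approx

theorem map_mul (hs : IsAdditiveState h) (hp : ∀ x, p x ∈ Icc (0:ℝ) 1) {r : ℝ}
    (hr : r ∈ Icc (0:ℝ) 1) : h (fun x => r * p x) = r * h p := by
  have hr' : 1 - r ∈ Icc (0:ℝ) 1 := ⟨by linarith [hr.2], by linarith [hr.1]⟩
  have hmul : ∀ {s : ℝ}, s ∈ Icc (0:ℝ) 1 → ∀ x, s * p x ∈ Icc (0:ℝ) 1 := fun hs x =>
    ⟨mul_nonneg hs.1 (hp x).1, mul_le_one₀ hs.2 (hp x).1 (hp x).2⟩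
  -- `h p = h (r p) + h ((1 - r) p)`, so the lower bounds for `r` and `1 - r` force equality
  have hsplit := hs.add _ _ (hmul hr) (hmul hr') fun x => by linarith [(hp x).2]
  simp only [← add_mul, add_sub_cancel, one_mul] at hsplit
  linarith [hs.mul_le_map_mul hp hr, hs.mul_le_map_mul hp hr']

theorem isState (hs : IsAdditiveState h) : IsState h :=
  ⟨hs.map_one, hs.mem, hs.add, fun _ _ hr hp => hs.map_mul hp hr⟩

end IsAdditiveState

namespace IsFinAddMeasure

variable {X : Type*} {m : Set X → ℝ}

theorem map_univ (hm : IsFinAddMeasure m) : m univ = 1 := hm.1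

theorem mem (hm : IsFinAddMeasure m) (U : Set X) : m U ∈ Icc (0:ℝ) 1 := hm.2.1 U

theorem union (hm : IsFinAddMeasure m) {U V : Set X} (hUV : Disjoint U V) :
    m (U ∪ V) = m U + m V :=
  hm.2.2 U V hUV

theorem map_empty (hm : IsFinAddMeasure m) : m ∅ = 0 := by
  simpa using hm.union (empty_disjoint ∅)

theorem mono (hm : IsFinAddMeasure m) {U V : Set X} (hUV : U ⊆ V) : m U ≤ m V := by
  have := hm.union (disjoint_sdiff_right (s := U) (t := V))
  rw [union_sdiff_cancel hUV] at this
  linarith [(hm.mem (V \ U)).1]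

end IsFinAddMeasure

namespace FinAddMeasure

variable {X : Type*} {m : Set X → ℝ}

/-- Layer-cake formula `∑_{k < N} m {k < f}` for the integral of `f`; it is meant for `f ≤ N`. -/
def natIntegral (m : Set X → ℝ) (N : ℕ) (f : X → ℕ) : ℝ :=
  ∑ k ∈ Finset.range N, m {x | k < f x}

theorem natIntegral_zero (f : X → ℕ) : natIntegral m 0 f = 0 := Finset.sum_range_zero _

theorem natIntegral_succ (N : ℕ) (f : X → ℕ) :
    natIntegral m (N + 1) f = m {x | 0 < f x} + natIntegral m N (f - 1) := by
  simp only [natIntegral, Finset.sum_range_succ', add_comm, Pi.sub_apply, Pi.one_apply]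
  congr 2
  ext k
  congr 1
  ext x
  simp only [mem_ofPred_eq]
  omega

theorem natIntegral_nonneg (hm : IsFinAddMeasure m) (N : ℕ) (f : X → ℕ) :
    0 ≤ natIntegral m N f :=
  Finset.sum_nonneg fun _ _ => (hm.mem _).1

theorem natIntegral_le (hm : IsFinAddMeasure m) (N : ℕ) (f : X → ℕ) :
    natIntegral m N f ≤ N := by
  unfold natIntegral
  simpa using Finset.sum_le_sum fun k (_ : k ∈ Finset.range N) => (hm.mem {x | k < f x}).2

theorem natIntegral_mono (hm : IsFinAddMeasure m) (N : ℕ) {f g : X → ℕ} (hfg : ∀ x, f x ≤ g x) :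
    natIntegral m N f ≤ natIntegral m N g :=
  Finset.sum_le_sum fun _ _ => hm.mono fun x hx => lt_of_lt_of_le hx (hfg x)

theorem natIntegral_of_le (hm : IsFinAddMeasure m) {N N' : ℕ} (hN : N ≤ N') {f : X → ℕ}
    (hf : ∀ x, f x ≤ N) : natIntegral m N' f = natIntegral m N f := by
  refine (Finset.sum_subset (Finset.range_subset_range.2 hN) fun k _ hk => ?_).symm
  have hempty : {x | k < f x} = ∅ := by
    ext x
    simp only [Finset.mem_range, not_lt] at hk
    simp only [mem_ofPred_eq, mem_empty_iff_false, iff_false, not_lt]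
    exact (hf x).trans hk
  rw [hempty, hm.map_empty]

theorem natIntegral_add_indicator (hm : IsFinAddMeasure m) {N : ℕ} {f : X → ℕ}
    (hf : ∀ x, f x ≤ N) (A : Set X) :
    natIntegral m (N + 1) (f + A.indicator 1) = natIntegral m N f + m A := by
  -- raising `f` by one on `A` adds the slice `A ∩ {f = k}` to `{k < f}`, and these slices
  -- telescope to `m A`
  have hslice : ∀ k, m {x | k < f x + A.indicator 1 x} =
      m {x | k < f x} + (m (A ∩ {x | k ≤ f x}) - m (A ∩ {x | k + 1 ≤ f x})) := by
    intro k
    have hlevel : {x | k < f x + A.indicator 1 x} = {x | k < f x} ∪ (A ∩ {x | f x = k}) := by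
      ext x
      by_cases hx : x ∈ A <;> simp [hx]; omega
    have hA : A ∩ {x | k ≤ f x} = (A ∩ {x | k + 1 ≤ f x}) ∪ (A ∩ {x | f x = k}) := by
      ext x
      by_cases hx : x ∈ A <;> simp [hx]; omega
    have hdisj : ∀ B : Set X, (∀ x ∈ B, f x ≠ k) → Disjoint B (A ∩ {x | f x = k}) :=
      fun B hB => disjoint_left.2 fun x hxB hx => hB x hxB hx.2
    rw [hlevel, hA, hm.union (hdisj _ fun x hx => by simp at hx; omega),
      hm.union (hdisj _ fun x hx => by simp at hx; omega)]
    ring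
  have htop : A ∩ {x | N + 1 ≤ f x} = ∅ := by
    ext x
    simp only [mem_inter_iff, mem_ofPred_eq, mem_empty_iff_false, iff_false, not_and, not_le]
    exact fun _ => Nat.lt_succ_of_le (hf x)
  have hbottom : A ∩ {x | 0 ≤ f x} = A := by simp
  calc natIntegral m (N + 1) (f + A.indicator 1)
      = ∑ k ∈ Finset.range (N + 1), (m {x | k < f x} +
          (m (A ∩ {x | k ≤ f x}) - m (A ∩ {x | k + 1 ≤ f x}))) :=
        Finset.sum_congr rfl fun k _ => hslice k
    _ = natIntegral m N f + m A := by
        rw [Finset.sum_add_distrib, Finset.sum_range_sub' (fun k => m (A ∩ {x | k ≤ f x})),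
          ← natIntegral, natIntegral_of_le hm N.le_succ hf, hbottom, htop, hm.map_empty, sub_zero]

theorem natIntegral_add (hm : IsFinAddMeasure m) {N M : ℕ} {f g : X → ℕ} (hf : ∀ x, f x ≤ N)
    (hg : ∀ x, g x ≤ M) :
    natIntegral m (N + M) (f + g) = natIntegral m N f + natIntegral m M g := by
  induction M generalizing g with
  | zero =>
    have : g = 0 := funext fun x => Nat.le_zero.1 (hg x)
    subst this
    simp [natIntegral_zero]
  | succ M ih =>
    have hpeel : f + g = (f + (g - 1)) + {x | 0 < g x}.indicator 1 := by
      funext x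
      by_cases hx : 0 < g x <;> simp [hx] <;> omega
    have hg' : ∀ x, (g - 1) x ≤ M := fun x => by
      simp only [Pi.sub_apply, Pi.one_apply]; have := hg x; omega
    rw [← add_assoc, hpeel,
      natIntegral_add_indicator hm (f := f + (g - 1)) fun x => add_le_add (hf x) (hg' x),
      ih hg', natIntegral_succ M g]
    ring

variable {p q : X → ℝ}

noncomputable def dyadicFloor (n : ℕ) (p : X → ℝ) (x : X) : ℕ := ⌊(2:ℝ) ^ n * p x⌋₊

/-- The Riemann sum `2⁻ⁿ ∑_{k < 2ⁿ} m {(k + 1) 2⁻ⁿ ≤ p}` of the layer-cake integral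
`∫₀¹ m {t ≤ p} dt`. -/
noncomputable def riemannSum (m : Set X → ℝ) (n : ℕ) (p : X → ℝ) : ℝ :=
  ((2:ℝ) ^ n)⁻¹ * natIntegral m (2 ^ n) (dyadicFloor n p)

noncomputable def integral (m : Set X → ℝ) (p : X → ℝ) : ℝ := ⨆ n, riemannSum m n p

theorem dyadicFloor_le (n : ℕ) (hp : ∀ x, p x ≤ 1) (x : X) : dyadicFloor n p x ≤ 2 ^ n :=
  Nat.floor_le_of_le <| by
    simpa using mul_le_mul_of_nonneg_left (hp x) (by positivity : (0:ℝ) ≤ 2 ^ n)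

theorem dyadicFloor_mem_Icc (n : ℕ) (hp : ∀ x, 0 ≤ p x) (x : X) :
    ((2:ℝ) ^ n)⁻¹ * dyadicFloor n p x ∈ Icc (p x - ((2:ℝ) ^ n)⁻¹) (p x) := by
  have h2n : (0:ℝ) < 2 ^ n := by positivity
  have hlo := Nat.floor_le (mul_nonneg h2n.le (hp x))
  have hhi := Nat.lt_floor_add_one ((2:ℝ) ^ n * p x)
  rw [dyadicFloor, mem_Icc, sub_le_iff_le_add, ← mul_add_one, inv_mul_le_iff₀ h2n,
    le_inv_mul_iff₀ h2n]
  exact ⟨hhi.le, hlo⟩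

theorem two_mul_dyadicFloor_le (n : ℕ) (hp : ∀ x, 0 ≤ p x) (x : X) :
    2 * dyadicFloor n p x ≤ dyadicFloor (n + 1) p x := by
  refine Nat.le_floor ?_
  push_cast
  rw [pow_succ, mul_comm _ (2:ℝ), mul_assoc]
  exact mul_le_mul_of_nonneg_left (Nat.floor_le (by have := hp x; positivity)) zero_le_two

theorem add_dyadicFloor_le (n : ℕ) (hp : ∀ x, 0 ≤ p x) (hq : ∀ x, 0 ≤ q x) (x : X) :
    dyadicFloor n p x + dyadicFloor n q x ≤ dyadicFloor n (p + q) x := by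
  have h2n : (0:ℝ) ≤ 2 ^ n := by positivity
  refine Nat.le_floor ?_
  push_cast
  rw [Pi.add_apply, mul_add]
  exact add_le_add (Nat.floor_le (mul_nonneg h2n (hp x))) (Nat.floor_le (mul_nonneg h2n (hq x)))

theorem dyadicFloor_add_le (n : ℕ) (hp : ∀ x, 0 ≤ p x) (hq : ∀ x, 0 ≤ q x) (x : X) :
    dyadicFloor n (p + q) x ≤ dyadicFloor n p x + dyadicFloor n q x + 1 := by
  have h2n : (0:ℝ) ≤ 2 ^ n := by positivity
  refine Nat.lt_succ_iff.1 ((Nat.floor_lt (mul_nonneg h2n (add_nonneg (hp x) (hq x)))).2 ?_)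
  push_cast [dyadicFloor]
  rw [mul_add]
  linarith [Nat.lt_floor_add_one ((2:ℝ) ^ n * p x), Nat.lt_floor_add_one ((2:ℝ) ^ n * q x)]


theorem riemannSum_mem (hm : IsFinAddMeasure m) (n : ℕ) (p : X → ℝ) :
    riemannSum m n p ∈ Icc (0:ℝ) 1 := by
  have h2n : (0:ℝ) < 2 ^ n := by positivity
  refine ⟨mul_nonneg (inv_nonneg.2 h2n.le) (natIntegral_nonneg hm _ _), ?_⟩
  rw [riemannSum, inv_mul_le_one₀ h2n]
  exact_mod_cast natIntegral_le hm _ _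

theorem riemannSum_le_succ (hm : IsFinAddMeasure m) (hp : ∀ x, p x ∈ Icc (0:ℝ) 1) (n : ℕ) :
    riemannSum m n p ≤ riemannSum m (n + 1) p := by
  have hfl := dyadicFloor_le n fun x => (hp x).2
  calc riemannSum m n p
      = ((2:ℝ) ^ (n + 1))⁻¹ * (natIntegral m (2 ^ n) (dyadicFloor n p) +
          natIntegral m (2 ^ n) (dyadicFloor n p)) := by
        rw [riemannSum, pow_succ, mul_inv, ← two_mul]; ring
    _ = ((2:ℝ) ^ (n + 1))⁻¹ *
          natIntegral m (2 ^ n + 2 ^ n) (dyadicFloor n p + dyadicFloor n p) := by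
        rw [natIntegral_add hm hfl hfl]
    _ ≤ riemannSum m (n + 1) p := by
        rw [riemannSum, ← two_mul, ← pow_succ']
        gcongr
        exact natIntegral_mono hm _ fun x => by
          simpa [two_mul] using two_mul_dyadicFloor_le n (fun x => (hp x).1) x

theorem le_riemannSum_add (hm : IsFinAddMeasure m) (hp : ∀ x, p x ∈ Icc (0:ℝ) 1)
    (hq : ∀ x, q x ∈ Icc (0:ℝ) 1) (hpq : ∀ x, p x + q x ≤ 1) (n : ℕ) :
    riemannSum m n p + riemannSum m n q ≤ riemannSum m n (p + q) := by
  have hflp := dyadicFloor_le n fun x => (hp x).2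
  have hflq := dyadicFloor_le n fun x => (hq x).2
  have hflpq := dyadicFloor_le (p := p + q) n hpq
  simp only [riemannSum, ← mul_add]
  gcongr
  rw [← natIntegral_add hm hflp hflq, ← natIntegral_of_le hm (Nat.le_add_right _ _) hflpq]
  exact natIntegral_mono hm _ (add_dyadicFloor_le n (fun x => (hp x).1) fun x => (hq x).1)

theorem riemannSum_add_le (hm : IsFinAddMeasure m) (hp : ∀ x, p x ∈ Icc (0:ℝ) 1)
    (hq : ∀ x, q x ∈ Icc (0:ℝ) 1) (hpq : ∀ x, p x + q x ≤ 1) (n : ℕ) :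
    riemannSum m n (p + q) ≤ riemannSum m n p + riemannSum m n q + ((2:ℝ) ^ n)⁻¹ := by
  have hflp := dyadicFloor_le n fun x => (hp x).2
  have hflq := dyadicFloor_le n fun x => (hq x).2
  have hflpq := dyadicFloor_le (p := p + q) n hpq
  have hone : natIntegral m 1 (1 : X → ℕ) = 1 := by simp [natIntegral, hm.map_univ]
  have hsum : natIntegral m (2 ^ n) (dyadicFloor n (p + q)) ≤
      natIntegral m (2 ^ n) (dyadicFloor n p) + natIntegral m (2 ^ n) (dyadicFloor n q) + 1 := by
    rw [← natIntegral_of_le hm ((Nat.le_add_right _ (2 ^ n)).trans (Nat.le_add_right _ 1)) hflpq,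
      ← natIntegral_add hm hflp hflq, ← hone,
      ← natIntegral_add hm (f := dyadicFloor n p + dyadicFloor n q) (g := 1)
        (fun x => add_le_add (hflp x) (hflq x)) fun _ => le_rfl]
    exact natIntegral_mono hm _ (dyadicFloor_add_le n (fun x => (hp x).1) fun x => (hq x).1)
  simp only [riemannSum]
  nlinarith [inv_pos.2 (by positivity : (0:ℝ) < 2 ^ n)]

theorem riemannSum_indicator (n : ℕ) (U : Set X) :
    riemannSum m n (U.indicator fun _ => 1) = m U := by
  have hfloor : ⌊(2:ℝ) ^ n⌋₊ = 2 ^ n := by exact_mod_cast Nat.floor_natCast (R := ℝ) (2 ^ n)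
  have hlevel : ∀ k < 2 ^ n, {x | k < dyadicFloor n (U.indicator fun _ => 1) x} = U := by
    intro k hk
    ext x
    by_cases hx : x ∈ U <;> simp [dyadicFloor, hx, hk, hfloor]
  rw [riemannSum, natIntegral,
    Finset.sum_congr rfl fun k hk => by rw [hlevel k (Finset.mem_range.1 hk)]]
  simp

theorem tendsto_riemannSum (hm : IsFinAddMeasure m) (hp : ∀ x, p x ∈ Icc (0:ℝ) 1) :
    Tendsto (fun n => riemannSum m n p) atTop (𝓝 (integral m p)) :=
  tendsto_atTop_ciSup (monotone_nat_of_le_succ (riemannSum_le_succ hm hp))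
    ⟨1, by rintro _ ⟨n, rfl⟩; exact (riemannSum_mem hm n p).2⟩

theorem integral_mem (hm : IsFinAddMeasure m) (hp : ∀ x, p x ∈ Icc (0:ℝ) 1) :
    integral m p ∈ Icc (0:ℝ) 1 :=
  isClosed_Icc.mem_of_tendsto (tendsto_riemannSum hm hp)
    (Eventually.of_forall (riemannSum_mem hm · p))

theorem integral_add (hm : IsFinAddMeasure m) (hp : ∀ x, p x ∈ Icc (0:ℝ) 1)
    (hq : ∀ x, q x ∈ Icc (0:ℝ) 1) (hpq : ∀ x, p x + q x ≤ 1) :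
    integral m (fun x => p x + q x) = integral m p + integral m q := by
  have hpq' : ∀ x, (p + q) x ∈ Icc (0:ℝ) 1 := fun x => ⟨add_nonneg (hp x).1 (hq x).1, hpq x⟩
  have hsum := (tendsto_riemannSum hm hp).add (tendsto_riemannSum hm hq)
  refine le_antisymm (le_of_tendsto_of_tendsto' (tendsto_riemannSum hm hpq')
    (by simpa using hsum.add tendsto_inv_two_pow_atTop) (riemannSum_add_le hm hp hq hpq)) ?_
  exact le_of_tendsto_of_tendsto' hsum (tendsto_riemannSum hm hpq') (le_riemannSum_add hm hp hq hpq)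

theorem integral_indicator (U : Set X) :
    integral m (U.indicator fun _ => 1) = m U := by
  simp only [integral, riemannSum_indicator, ciSup_const]

theorem isState_integral (hm : IsFinAddMeasure m) : IsState (integral m) :=
  IsAdditiveState.isState
    { map_one := by rw [← indicator_univ (fun _ : X => (1:ℝ)), integral_indicator, hm.map_univ]
      mem := fun _ hp => integral_mem hm hp
      add := fun _ _ hp hq hpq => integral_add hm hp hq hpq }

end FinAddMeasure

open FinAddMeasure

section StateMeasure

variable {X : Type*} {h : (X → ℝ) → ℝ} {p : X → ℝ}

noncomputable def stateMeasure (h : (X → ℝ) → ℝ) (U : Set X) : ℝ := h (U.indicator fun _ => 1)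

theorem indicator_one_mem_Icc (U : Set X) (x : X) :
    U.indicator (fun _ => (1:ℝ)) x ∈ Icc (0:ℝ) 1 := by
  by_cases hx : x ∈ U <;> simp [hx]

namespace IsState

theorem isFinAddMeasure (hs : IsState h) : IsFinAddMeasure (stateMeasure h) := by
  refine ⟨by simpa [stateMeasure] using hs.map_one, fun U => hs.mem _ (indicator_one_mem_Icc U),
    fun U V hUV => ?_⟩
  have hsum : ∀ x, U.indicator (fun _ => (1:ℝ)) x + V.indicator (fun _ => 1) x ≤ 1 := fun x => by
    simpa [indicator_union_of_disjoint hUV] using (indicator_one_mem_Icc (U ∪ V) x).2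
  rw [stateMeasure, indicator_union_of_disjoint hUV]
  exact hs.add _ _ (indicator_one_mem_Icc U) (indicator_one_mem_Icc V) hsum

theorem map_const (hs : IsState h) {c : ℝ} (hc : c ∈ Icc (0:ℝ) 1) : h (fun _ => c) = c := by
  simpa [hs.map_one] using hs.smul c (fun _ => 1) hc fun _ => ⟨zero_le_one, le_rfl⟩

theorem map_mul_natCast (hs : IsState h) {c : ℝ} (hc : 0 ≤ c) {N : ℕ} (hNc : N * c ≤ 1)
    {f : X → ℕ} (hf : ∀ x, f x ≤ N) :
    h (fun x => c * f x) = c * natIntegral (stateMeasure h) N f := by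
  induction N generalizing f with
  | zero =>
    have : f = 0 := funext fun x => Nat.le_zero.1 (hf x)
    subst this
    simpa [natIntegral_zero] using hs.isAdditiveState.map_zero
  | succ N ih =>
    push_cast at hNc
    have hc1 : c ∈ Icc (0:ℝ) 1 := ⟨hc, by nlinarith [(N.cast_nonneg : (0:ℝ) ≤ N)]⟩
    have hf' : ∀ x, (f - 1) x ≤ N := fun x => by
      simp only [Pi.sub_apply, Pi.one_apply]; have := hf x; omega
    have hmem : ∀ g : X → ℕ, (∀ x, g x ≤ N + 1) → ∀ x, c * g x ∈ Icc (0:ℝ) 1 := fun g hg x => by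
      have : (g x : ℝ) ≤ N + 1 := by exact_mod_cast hg x
      exact ⟨by positivity, by nlinarith⟩
    set A := {x | 0 < f x}
    have hA : ∀ x, c * A.indicator (fun _ => 1) x ∈ Icc (0:ℝ) 1 := fun x => by
      by_cases hx : x ∈ A <;> simp [hx, hc1.1, hc1.2]
    have hpeel : (fun x => c * (f x : ℝ)) =
        fun x => c * ((f - 1) x : ℕ) + c * A.indicator (fun _ => 1) x := by
      funext x
      by_cases hx : 0 < f x
      · simp [A, hx, Nat.cast_sub (Nat.one_le_of_lt hx)]
        ring
      · simp [A, Nat.eq_zero_of_not_pos hx]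
    have hsplit := hs.add _ _ (hmem _ fun x => (hf' x).trans N.le_succ) hA fun x => by
      rw [← congrFun hpeel x]; exact (hmem f hf x).2
    rw [hpeel, hsplit, ih (by nlinarith) hf', hs.smul c _ hc1 (indicator_one_mem_Icc A),
      natIntegral_succ, stateMeasure]
    ring

theorem riemannSum_mem_Icc (hs : IsState h) (hp : ∀ x, p x ∈ Icc (0:ℝ) 1) (n : ℕ) :
    riemannSum (stateMeasure h) n p ∈ Icc (h p - ((2:ℝ) ^ n)⁻¹) (h p) := by
  set ε : ℝ := ((2:ℝ) ^ n)⁻¹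
  have hε : ε ∈ Icc (0:ℝ) 1 := ⟨by positivity, inv_le_one_of_one_le₀ (one_le_pow₀ one_le_two)⟩
  set s : X → ℝ := fun x => ε * dyadicFloor n p x
  have hs_eq : h s = riemannSum (stateMeasure h) n p :=
    hs.map_mul_natCast hε.1 (by simp [ε]) (dyadicFloor_le n fun x => (hp x).2)
  have hsp : ∀ x, s x ∈ Icc (p x - ε) (p x) := dyadicFloor_mem_Icc n fun x => (hp x).1
  have hs01 : ∀ x, s x ∈ Icc (0:ℝ) 1 := fun x => ⟨by positivity, (hsp x).2.trans (hp x).2⟩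
  have hd : ∀ x, p x - s x ∈ Icc (0:ℝ) ε := fun x =>
    ⟨sub_nonneg.2 (hsp x).2, by linarith [(hsp x).1]⟩
  have hd01 : ∀ x, p x - s x ∈ Icc (0:ℝ) 1 := fun x => ⟨(hd x).1, (hd x).2.trans hε.2⟩
  have hsplit := hs.add s _ hs01 hd01 fun x => by linarith [(hp x).2]
  simp only [add_sub_cancel] at hsplit
  have hd_le : h (fun x => p x - s x) ≤ ε := by
    simpa [hs.map_const hε] using
      hs.isAdditiveState.mono hd01 (fun _ => hε) fun x => (hd x).2
  have hd_nonneg := (hs.mem _ hd01).1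
  rw [← hs_eq]
  constructor <;> linarith

theorem tendsto_riemannSum (hs : IsState h) (hp : ∀ x, p x ∈ Icc (0:ℝ) 1) :
    Tendsto (fun n => riemannSum (stateMeasure h) n p) atTop (𝓝 (h p)) :=
  tendsto_of_tendsto_of_tendsto_of_le_of_le
    (by simpa using tendsto_const_nhds.sub tendsto_inv_two_pow_atTop) tendsto_const_nhds
    (fun n => (hs.riemannSum_mem_Icc hp n).1) fun n => (hs.riemannSum_mem_Icc hp n).2

theorem eq_integral (hs : IsState h) (hp : ∀ x, p x ∈ Icc (0:ℝ) 1) :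
    h p = integral (stateMeasure h) p :=
  tendsto_nhds_unique (hs.tendsto_riemannSum hp)
    (FinAddMeasure.tendsto_riemannSum hs.isFinAddMeasure hp)

end IsState

end StateMeasure

/-- States on `[0,1]^X` correspond bijectively to finitely additive measures on `𝒫(X)`,
via `Φ(h)(U) = h(𝟙_U)`: the map `Φ` is well defined, injective (on predicates),
and surjective. -/
theorem states_biject_finAddMeasures {X : Type*} :
    (∀ h : (X → ℝ) → ℝ, IsState h →
      IsFinAddMeasure (fun U => h (Set.indicator U (fun _ => 1)))) ∧
    (∀ h h' : (X → ℝ) → ℝ, IsState h → IsState h' →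
      (∀ U : Set X, h (Set.indicator U (fun _ => 1)) = h' (Set.indicator U (fun _ => 1))) →
      ∀ p : X → ℝ, (∀ x, p x ∈ Set.Icc (0:ℝ) 1) → h p = h' p) ∧
    (∀ m : Set X → ℝ, IsFinAddMeasure m →
      ∃ h : (X → ℝ) → ℝ, IsState h ∧
        ∀ U : Set X, h (Set.indicator U (fun _ => 1)) = m U) := by
  refine ⟨fun h hs => hs.isFinAddMeasure, fun h h' hs hs' hagree p hp => ?_,
    fun m hm => ⟨integral m, isState_integral hm, integral_indicator⟩⟩
  have hmeasure : stateMeasure h = stateMeasure h' := funext hagree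
  rw [hs.eq_integral hp, hs'.eq_integral hp, hmeasure]
end

section
/- Injectivity of states via simple functions: if two states h, h' on [0,1]^X agree on all indicator functions of subsets of X, then they are equal. -/
lemma states_key {X : Type*} (h h' : (X → ℝ) → ℝ)
    (hh : IsState h) (hh' : IsState h')
    (hind : ∀ U : Set X, h (Set.indicator U (fun _ => 1)) = h' (Set.indicator U (fun _ => 1))) :
    ∀ n : ℕ, ∀ p : X → ℝ, (∀ x, p x ∈ Set.Icc (0:ℝ) 1) → |h p - h' p| ≤ 1 / 2 ^ n := by
  intro n
  induction n with
  | zero =>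
    intro p hp
    obtain ⟨a1, a2⟩ := hh.mem p hp
    obtain ⟨b1, b2⟩ := hh'.mem p hp
    rw [abs_le]
    constructor <;> simp <;> linarith
  | succ n ih =>
    intro p hp
    set U : Set X := {x | 1/2 ≤ p x} with hU
    set ind : X → ℝ := Set.indicator U (fun _ => 1) with hindd
    have hmemind : ∀ x, ind x ∈ Set.Icc (0:ℝ) 1 := by
      intro x
      by_cases hx : x ∈ U <;> simp [hindd, Set.indicator_apply, hx]
    set g : X → ℝ := fun x => 2 * p x - ind x with hg
    have hmemg : ∀ x, g x ∈ Set.Icc (0:ℝ) 1 := by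
      intro x
      obtain ⟨h1, h2⟩ := hp x
      by_cases hx : (1:ℝ)/2 ≤ p x
      · have : x ∈ U := hx
        simp only [hg, hindd, Set.indicator_apply, if_pos this]
        constructor <;> simp <;> linarith
      · have : x ∉ U := hx
        simp only [hg, hindd, Set.indicator_apply, if_neg this]
        push_neg at hx
        constructor <;> simp <;> linarith
    have hdecomp : ∀ x, p x = (1/2) * ind x + (1/2) * g x := by
      intro x; simp only [hg]; ring
    have hmemhalf : ∀ (q : X → ℝ), (∀ x, q x ∈ Set.Icc (0:ℝ) 1) →
        ∀ x, (1/2 : ℝ) * q x ∈ Set.Icc (0:ℝ) 1 := by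
      intro q hq x
      obtain ⟨a1, a2⟩ := hq x
      constructor <;> linarith
    have hsum : ∀ x, (1/2 : ℝ) * ind x + (1/2) * g x ≤ 1 := by
      intro x; rw [← hdecomp x]; exact (hp x).2
    have split : ∀ (H : (X → ℝ) → ℝ), IsState H →
        H p = (1/2) * H ind + (1/2) * H g := by
      intro H HS
      have h1 : H p = H (fun x => (1/2) * ind x + (1/2) * g x) := by
        congr 1; funext x; exact hdecomp x
      rw [h1, HS.add _ _ (hmemhalf ind hmemind) (hmemhalf g hmemg) hsum,
        HS.smul (1/2) ind (by norm_num) hmemind, HS.smul (1/2) g (by norm_num) hmemg]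
    have e1 := split h hh
    have e2 := split h' hh'
    have e3 := hind U
    have key : h p - h' p = (1/2) * (h g - h' g) := by
      rw [e1, e2, ← hindd] at *
      rw [e3]; ring
    rw [key, abs_mul, abs_of_nonneg (by norm_num : (0:ℝ) ≤ 1/2)]
    have := ih g hmemg
    rw [pow_succ]
    calc 1/2 * |h g - h' g| ≤ 1/2 * (1 / 2 ^ n) := by linarith
      _ = 1 / (2^n * 2) := by ring

/-- Injectivity of states via simple functions: two states on `[0,1]^X` agreeing on
all indicator functions of subsets of `X` agree on all fuzzy predicates. -/
theorem states_eq_of_eq_on_indicators {X : Type*} (h h' : (X → ℝ) → ℝ)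
    (hh : IsState h) (hh' : IsState h')
    (hind : ∀ U : Set X, h (Set.indicator U (fun _ => 1)) = h' (Set.indicator U (fun _ => 1))) :
    ∀ p : X → ℝ, (∀ x, p x ∈ Set.Icc (0:ℝ) 1) → h p = h' p := by
  intro p hp
  have key := fun n => states_key h h' hh hh' hind n p hp
  have h0 : |h p - h' p| = 0 := by
    by_contra hne
    have hpos : 0 < |h p - h' p| := lt_of_le_of_ne (abs_nonneg _) (Ne.symm hne)
    obtain ⟨n, hn⟩ := exists_pow_lt_of_lt_one hpos (by norm_num : (1:ℝ)/2 < 1)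
    have := key n
    rw [div_pow, one_pow] at hn
    rw [one_div] at this
    rw [one_div] at hn
    linarith
  have := abs_eq_zero.mp h0
  linarith
end

section
/- For any monad T on Sets and the continuation monad C(X) = C^(C^X) on a fixed set C, there is a bijective correspondence between Eilenberg–Moore algebra structures a : T(C) → C and monad morphisms T ⇒ C(−). -/
/-- A monad on the category of types (sets). -/
structure SetMonad where
  obj : Type → Type
  map : {α β : Type} → (α → β) → obj α → obj β
  unit : {α : Type} → α → obj α
  mult : {α : Type} → obj (obj α) → obj α
  map_id : ∀ {α : Type} (x : obj α), map id x = x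
  map_comp : ∀ {α β γ : Type} (f : α → β) (g : β → γ) (x : obj α),
    map (g ∘ f) x = map g (map f x)
  unit_natural : ∀ {α β : Type} (f : α → β) (x : α), map f (unit x) = unit (f x)
  mult_natural : ∀ {α β : Type} (f : α → β) (x : obj (obj α)),
    map f (mult x) = mult (map (map f) x)
  mult_unit : ∀ {α : Type} (x : obj α), mult (unit x) = x
  mult_map_unit : ∀ {α : Type} (x : obj α), mult (map unit x) = x
  mult_mult : ∀ {α : Type} (x : obj (obj (obj α))), mult (mult x) = mult (map mult x)

/-- Eilenberg–Moore algebra structures on a carrier `C`. -/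
def IsAlgebra (T : SetMonad) (C : Type) (a : T.obj C → C) : Prop :=
  (∀ x : C, a (T.unit x) = x) ∧
  (∀ x : T.obj (T.obj C), a (T.map a x) = a (T.mult x))

/-- Monad morphisms from `T` to the continuation monad `X ↦ (X → C) → C`. -/
def IsMonadMorToCont (T : SetMonad) (C : Type)
    (σ : (α : Type) → T.obj α → (α → C) → C) : Prop :=
  (∀ (α β : Type) (f : α → β) (x : T.obj α) (g : β → C), σ β (T.map f x) g = σ α x (g ∘ f)) ∧
  (∀ (α : Type) (x : α) (g : α → C), σ α (T.unit x) g = g x) ∧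
  (∀ (α : Type) (x : T.obj (T.obj α)) (g : α → C),
    σ α (T.mult x) g = σ (T.obj α) x (fun u => σ α u g))

/-- The map sending an algebra `a : T C → C` to the monad morphism
`σ_α(u)(g) = a (T g u)`. -/
def algToMor (T : SetMonad) (C : Type) (a : T.obj C → C) :
    (α : Type) → T.obj α → (α → C) → C :=
  fun _ x g => a (T.map g x)

/-- For any monad `T` on sets and the continuation monad on `C`, Eilenberg–Moore
algebra structures `a : T C → C` correspond bijectively to monad morphisms
`T ⇒ ((− → C) → C)`, via `σ_α(u)(g) = a(T g u)` and `a(u) = σ_C(u)(id)`. -/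
theorem algebras_biject_monadMorphisms_to_continuation (T : SetMonad) (C : Type) :
    (∀ a : T.obj C → C, IsAlgebra T C a → IsMonadMorToCont T C (algToMor T C a)) ∧
    (∀ σ : (α : Type) → T.obj α → (α → C) → C, IsMonadMorToCont T C σ →
      IsAlgebra T C (fun u => σ C u id)) ∧
    (∀ a : T.obj C → C, IsAlgebra T C a → (fun u => algToMor T C a C u id) = a) ∧
    (∀ σ : (α : Type) → T.obj α → (α → C) → C, IsMonadMorToCont T C σ →
      algToMor T C (fun u => σ C u id) = σ) := by
  refine ⟨?_, ?_, ?_, ?_⟩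
  · rintro a ⟨h1, h2⟩
    refine ⟨?_, ?_, ?_⟩
    · intro α β f x g
      simp [algToMor, ← T.map_comp]
    · intro α x g
      simp [algToMor, T.unit_natural, h1]
    · intro α x g
      simp only [algToMor, T.mult_natural]
      rw [← h2]
      rw [← T.map_comp]
      rfl
  · rintro σ ⟨hnat, hunit, hmult⟩
    refine ⟨fun x => hunit C x id, fun x => ?_⟩
    show σ C (T.map (fun u => σ C u id) x) id = σ C (T.mult x) id
    rw [hnat, hmult]
    rfl
  · rintro a ⟨h1, h2⟩
    funext u
    simp [algToMor, T.map_id]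
  · rintro σ ⟨hnat, hunit, hmult⟩
    funext α x g
    simp [algToMor, hnat]
end

section
/- The distribution-to-expectation map is injective and, on finite sets, bijective: for a finite set X, every state h on [0,1]^X is of the form p ↦ Σ_x φ(x) · p(x) for a unique probability distribution φ on X. -/
/-- The Dirac predicate at `x`. -/
def dirac {X : Type*} [DecidableEq X] (x : X) : X → ℝ := fun y => if y = x then 1 else 0

lemma dirac_mem {X : Type*} [DecidableEq X] (x : X) :
    ∀ y, dirac x y ∈ Set.Icc (0:ℝ) 1 := by
  intro y; unfold dirac; split <;> simp

lemma sum_dirac_eq {X : Type*} [DecidableEq X] (s : Finset X) (p : X → ℝ) (y : X) :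
    ∑ x ∈ s, p x * dirac x y = if y ∈ s then p y else 0 := by
  unfold dirac
  rw [← Finset.sum_ite_eq s y p]
  apply Finset.sum_congr rfl
  intro x _
  by_cases hxy : y = x <;> simp [hxy]

lemma key {X : Type*} [DecidableEq X] (h : (X → ℝ) → ℝ) (hs : IsState h)
    (p : X → ℝ) (hp : ∀ x, p x ∈ Set.Icc (0:ℝ) 1) (s : Finset X) :
    h (fun y => ∑ x ∈ s, p x * dirac x y) = ∑ x ∈ s, p x * h (dirac x) := by
  classical
  induction s using Finset.induction_on with
  | empty =>
    simp only [Finset.sum_empty]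
    have := hs.smul 0 (fun _ => 1) (by simp) (by simp)
    simpa using this
  | @insert a s ha ih =>
    have hmem1 : ∀ y, p a * dirac a y ∈ Set.Icc (0:ℝ) 1 := by
      intro y
      constructor
      · exact mul_nonneg (hp a).1 (dirac_mem a y).1
      · exact mul_le_one₀ (hp a).2 (dirac_mem a y).1 (dirac_mem a y).2
    have hmem2 : ∀ y, (∑ x ∈ s, p x * dirac x y) ∈ Set.Icc (0:ℝ) 1 := by
      intro y
      rw [sum_dirac_eq]
      split
      · exact hp y
      · simp
    have hsum : ∀ y, p a * dirac a y + ∑ x ∈ s, p x * dirac x y ≤ 1 := by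
      intro y
      rw [sum_dirac_eq]
      by_cases hya : y = a
      · subst hya
        simp [ha, dirac]
        exact (hp y).2
      · simp [dirac, hya]
        split
        · exact (hp y).2
        · simp
    simp only [Finset.sum_insert ha]
    have := hs.add (fun y => p a * dirac a y) (fun y => ∑ x ∈ s, p x * dirac x y)
      hmem1 hmem2 hsum
    calc h (fun y => p a * dirac a y + ∑ x ∈ s, p x * dirac x y)
        = h (fun y => p a * dirac a y) + h (fun y => ∑ x ∈ s, p x * dirac x y) := this
      _ = p a * h (dirac a) + ∑ x ∈ s, p x * h (dirac x) := by
          rw [hs.smul (p a) (dirac a) (hp a) (dirac_mem a), ih]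

/-- On a finite set `X`, the map `σ(φ)(p) = Σ_x φ(x)·p(x)` sends probability
distributions to states, and every state on `[0,1]^X` arises in this way from a
unique distribution. -/
theorem distributions_biject_states_of_finite {X : Type*} [Fintype X] :
    (∀ φ : X → ℝ, ((∀ x, φ x ∈ Set.Icc (0:ℝ) 1) ∧ ∑ x, φ x = 1) →
      IsState (fun p : X → ℝ => ∑ x, φ x * p x)) ∧
    (∀ h : (X → ℝ) → ℝ, IsState h →
      ∃! φ : X → ℝ, ((∀ x, φ x ∈ Set.Icc (0:ℝ) 1) ∧ ∑ x, φ x = 1) ∧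
        ∀ p : X → ℝ, (∀ x, p x ∈ Set.Icc (0:ℝ) 1) → h p = ∑ x, φ x * p x) := by
  classical
  constructor
  · rintro φ ⟨hφmem, hφsum⟩
    refine ⟨by simpa using hφsum, ?_, ?_, ?_⟩
    · intro p hp
      constructor
      · exact Finset.sum_nonneg fun x _ => mul_nonneg (hφmem x).1 (hp x).1
      · calc ∑ x, φ x * p x ≤ ∑ x, φ x * 1 :=
              Finset.sum_le_sum fun x _ =>
                mul_le_mul_of_nonneg_left (hp x).2 (hφmem x).1
          _ = 1 := by simpa using hφsum
    · intro p q _ _ _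
      simp [mul_add, Finset.sum_add_distrib]
    · intro r p _ _
      simp only [Finset.mul_sum]
      exact Finset.sum_congr rfl fun x _ => by ring
  · intro h hs
    refine ⟨fun x => h (dirac x), ⟨⟨fun x => hs.mem (dirac x) (dirac_mem x), ?_⟩, ?_⟩, ?_⟩
    · have := key h hs (fun _ => 1) (by simp) Finset.univ
      simp only [one_mul] at this
      have h1 : (fun y => ∑ x : X, dirac x y) = fun _ => (1:ℝ) := by
        funext y
        have := sum_dirac_eq Finset.univ (fun _ => (1:ℝ)) y
        simpa using this
      rw [h1, hs.map_one] at this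
      exact this.symm
    · intro p hp
      have := key h hs p hp Finset.univ
      have h1 : (fun y => ∑ x : X, p x * dirac x y) = p := by
        funext y
        have := sum_dirac_eq Finset.univ p y
        simpa using this
      rw [h1] at this
      rw [this]
      exact Finset.sum_congr rfl fun x _ => mul_comm _ _
    · rintro φ ⟨⟨hφmem, hφsum⟩, hφ⟩
      funext x
      have := hφ (dirac x) (dirac_mem x)
      have h2 : ∑ y, φ y * dirac x y = φ x := by
        have : ∀ y, φ y * dirac x y = φ y * dirac y x := by
          intro y; unfold dirac
          by_cases hxy : x = y <;> simp [hxy, eq_comm]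
        rw [Finset.sum_congr rfl fun y _ => this y]
        simpa using sum_dirac_eq Finset.univ φ x
      rw [h2] at this
      exact this.symm
end

section
/- If D is a Boolean algebra (or more generally an effect algebra), effect-algebra morphisms D → [0,1] correspond bijectively to effect-module morphisms from the free effect module [0,1] ⊗ D to [0,1]; concretely in the Boolean case: finitely additive [0,1]-valued measures on a Boolean algebra B correspond to states on the space of B-simple [0,1]-valued elements via m ↦ (⊎ᵢ rᵢ·𝟙_{Uᵢ} ↦ Σᵢ rᵢ·m(Uᵢ)). -/
/-- A simple fuzzy predicate on `X`: a `[0,1]`-valued function with finite range. -/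
def IsSimple {X : Type*} (q : X → ℝ) : Prop :=
  (Set.range q).Finite ∧ ∀ x, q x ∈ Set.Icc (0:ℝ) 1

/-- A state-like functional on the simple `[0,1]`-valued functions on `X`:
it sends `1` to `1`, is additive on pointwise-summable pairs of simple functions,
is `[0,1]`-homogeneous, and takes values in `[0,1]` on simple functions. -/
structure IsSimpleState {X : Type*} (h : (X → ℝ) → ℝ) : Prop where
  map_one : h (fun _ => 1) = 1
  mem : ∀ p : X → ℝ, IsSimple p → h p ∈ Set.Icc (0:ℝ) 1
  add : ∀ p q : X → ℝ, IsSimple p → IsSimple q → (∀ x, p x + q x ≤ 1) →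
    h (fun x => p x + q x) = h p + h q
  smul : ∀ (r : ℝ) (p : X → ℝ), r ∈ Set.Icc (0:ℝ) 1 → IsSimple p →
    h (fun x => r * p x) = r * h p

section AuxLemmas
variable {X : Type*}


lemma m_empty {m : Set X → ℝ} (hm : IsFinAddMeasure m) : m ∅ = 0 := by
  have := hm.2.2 ∅ ∅ (disjoint_bot_left)
  simp at this; linarith

lemma m_sum {m : Set X → ℝ} (hm : IsFinAddMeasure m) {ι : Type*} (s : Finset ι)
    (A : ι → Set X) (hd : ∀ i ∈ s, ∀ j ∈ s, i ≠ j → Disjoint (A i) (A j)) :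
    m (⋃ i ∈ s, A i) = ∑ i ∈ s, m (A i) := by
  classical
  induction s using Finset.induction_on with
  | empty => simpa using m_empty hm
  | @insert a t ha ih =>
    have hdisj : Disjoint (A a) (⋃ i ∈ t, A i) := by
      rw [Set.disjoint_iUnion₂_right]
      intro i hi
      exact hd a (Finset.mem_insert_self a t) i (Finset.mem_insert_of_mem hi)
        (by rintro rfl; exact ha hi)
    rw [Finset.set_biUnion_insert, hm.2.2 _ _ hdisj, Finset.sum_insert ha,
      ih (fun i hi j hj hij => hd i (Finset.mem_insert_of_mem hi) j (Finset.mem_insert_of_mem hj) hij)]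

open Classical in
noncomputable def integ (m : Set X → ℝ) (q : X → ℝ) : ℝ :=
  if hq : (Set.range q).Finite then ∑ r ∈ hq.toFinset, r * m (q ⁻¹' {r}) else 0

lemma integ_superset {m : Set X → ℝ} (hm : IsFinAddMeasure m) {q : X → ℝ}
    (T : Finset ℝ) (hT : Set.range q ⊆ ↑T) :
    integ m q = ∑ r ∈ T, r * m (q ⁻¹' {r}) := by
  have hq : (Set.range q).Finite := T.finite_toSet.subset hT
  rw [integ, dif_pos hq]
  refine Finset.sum_subset (by intro r hr; exact Finset.mem_coe.mp (hT (hq.mem_toFinset.mp hr))) ?_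
  intro r _ hr
  have : q ⁻¹' {r} = ∅ := by
    ext x; simp only [Set.mem_preimage, Set.mem_singleton_iff, Set.mem_empty_iff_false, iff_false]
    intro hx; exact hr (hq.mem_toFinset.mpr ⟨x, hx⟩)
  rw [this, m_empty hm, mul_zero]

lemma integ_indicator {m : Set X → ℝ} (hm : IsFinAddMeasure m) (U : Set X) :
    integ m (Set.indicator U (fun _ => 1)) = m U := by
  rw [integ_superset hm ({0, 1} : Finset ℝ) ?_]
  · have h1 : (Set.indicator U (fun _ => (1:ℝ))) ⁻¹' {1} = U := by
      ext x; by_cases hx : x ∈ U <;> simp [Set.indicator, hx]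
    rw [Finset.sum_pair (by norm_num : (0:ℝ) ≠ 1), h1]
    ring
  · rintro r ⟨x, rfl⟩
    by_cases hx : x ∈ U <;> simp [Set.indicator, hx]

lemma integ_one {m : Set X → ℝ} (hm : IsFinAddMeasure m) :
    integ m (fun _ : X => 1) = 1 := by
  rw [integ_superset hm ({1} : Finset ℝ) (by rintro r ⟨x, rfl⟩; simp)]
  have : (fun _ : X => (1:ℝ)) ⁻¹' {1} = Set.univ := by ext x; simp
  simp [this, hm.1]

lemma integ_mem {m : Set X → ℝ} (hm : IsFinAddMeasure m) {q : X → ℝ}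
    (hq : IsSimple q) : integ m q ∈ Set.Icc (0:ℝ) 1 := by
  rw [integ, dif_pos hq.1]
  constructor
  · refine Finset.sum_nonneg fun r hr => ?_
    obtain ⟨x, rfl⟩ := hq.1.mem_toFinset.mp hr
    exact mul_nonneg (hq.2 x).1 (hm.2.1 _).1
  · calc ∑ r ∈ hq.1.toFinset, r * m (q ⁻¹' {r})
        ≤ ∑ r ∈ hq.1.toFinset, m (q ⁻¹' {r}) := by
          refine Finset.sum_le_sum fun r hr => ?_
          obtain ⟨x, rfl⟩ := hq.1.mem_toFinset.mp hr
          exact mul_le_of_le_one_left (hm.2.1 _).1 (hq.2 x).2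
      _ = m (⋃ r ∈ hq.1.toFinset, q ⁻¹' {r}) := by
          rw [m_sum hm _ _ ?_]
          intro i _ j _ hij
          exact Set.disjoint_left.mpr fun x hx hx' => hij (hx.symm.trans hx')
      _ = m Set.univ := by
          congr 1
          ext x
          simp only [Set.mem_iUnion, Set.mem_preimage, Set.mem_singleton_iff, Set.mem_univ, iff_true]
          exact ⟨q x, hq.1.mem_toFinset.mpr ⟨x, rfl⟩, rfl⟩
      _ = 1 := hm.1

lemma integ_smul {m : Set X → ℝ} (hm : IsFinAddMeasure m) (r : ℝ) {p : X → ℝ}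
    (hr : r ∈ Set.Icc (0:ℝ) 1) (hp : IsSimple p) :
    integ m (fun x => r * p x) = r * integ m p := by
  rcases eq_or_ne r 0 with rfl | hr0
  · simp only [zero_mul]
    rw [integ_superset hm ({0} : Finset ℝ) (by rintro t ⟨x, rfl⟩; simp)]
    simp
  · rw [integ_superset hm (Finset.image (fun s => r * s) hp.1.toFinset)
      (by
        rintro t ⟨x, rfl⟩
        exact Finset.mem_coe.mpr (Finset.mem_image.mpr ⟨p x, hp.1.mem_toFinset.mpr ⟨x, rfl⟩, rfl⟩)),
      Finset.sum_image (fun a _ b _ hab => mul_left_cancel₀ hr0 hab)]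
    rw [integ, dif_pos hp.1, Finset.mul_sum]
    refine Finset.sum_congr rfl fun s _ => ?_
    have : (fun x => r * p x) ⁻¹' {r * s} = p ⁻¹' {s} := by
      ext x; simp only [Set.mem_preimage, Set.mem_singleton_iff]
      exact ⟨fun h => mul_left_cancel₀ hr0 h, fun h => by rw [h]⟩
    rw [this]; ring

lemma integ_add {m : Set X → ℝ} (hm : IsFinAddMeasure m) {p q : X → ℝ}
    (hp : IsSimple p) (hq : IsSimple q) :
    integ m (fun x => p x + q x) = integ m p + integ m q := by
  classical
  set Sp := hp.1.toFinset with hSp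
  set Sq := hq.1.toFinset with hSq
  set P : Finset (ℝ × ℝ) := Sp ×ˢ Sq with hP
  set T : Finset ℝ := P.image (fun pr => pr.1 + pr.2) with hT
  have hmemp : ∀ x, p x ∈ Sp := fun x => hp.1.mem_toFinset.mpr ⟨x, rfl⟩
  have hmemq : ∀ x, q x ∈ Sq := fun x => hq.1.mem_toFinset.mpr ⟨x, rfl⟩
  have h1 : integ m (fun x => p x + q x) = ∑ t ∈ T, t * m ((fun x => p x + q x) ⁻¹' {t}) := by
    refine integ_superset hm T ?_
    rintro t ⟨x, rfl⟩
    exact Finset.mem_coe.mpr (Finset.mem_image.mpr ⟨(p x, q x), Finset.mem_product.mpr ⟨hmemp x, hmemq x⟩, rfl⟩)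
  have h2 : ∀ t, m ((fun x => p x + q x) ⁻¹' {t})
      = ∑ pr ∈ P.filter (fun pr => pr.1 + pr.2 = t), m (p ⁻¹' {pr.1} ∩ q ⁻¹' {pr.2}) := by
    intro t
    rw [← m_sum hm _ _ ?_]
    · congr 1
      ext x
      simp only [Set.mem_iUnion, Set.mem_preimage, Set.mem_singleton_iff, Finset.mem_filter,
        Set.mem_inter_iff, Finset.mem_product]
      constructor
      · intro hx
        exact ⟨(p x, q x), ⟨show (p x, q x) ∈ Sp ×ˢ Sq from Finset.mem_product.mpr ⟨hmemp x, hmemq x⟩, hx⟩, rfl, rfl⟩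
      · rintro ⟨⟨a, b⟩, hab, ha, hb⟩
        simp only [Finset.mem_filter] at hab
        simp only [Set.mem_preimage, Set.mem_singleton_iff] at ha hb
        rw [ha, hb]; exact hab.2
    · intro i _ j _ hij
      refine Set.disjoint_left.mpr fun x hx hx' => hij ?_
      simp only [Set.mem_inter_iff, Set.mem_preimage, Set.mem_singleton_iff] at hx hx'
      exact Prod.ext (hx.1.symm.trans hx'.1) (hx.2.symm.trans hx'.2)
  have h3 : integ m (fun x => p x + q x)
      = ∑ pr ∈ P, (pr.1 + pr.2) * m (p ⁻¹' {pr.1} ∩ q ⁻¹' {pr.2}) := by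
    rw [h1]
    rw [← Finset.sum_fiberwise_of_maps_to (g := fun pr : ℝ × ℝ => pr.1 + pr.2)
      (fun pr hpr => Finset.mem_image.mpr ⟨pr, hpr, rfl⟩)]
    refine Finset.sum_congr rfl fun t _ => ?_
    rw [h2 t, Finset.mul_sum]
    refine Finset.sum_congr rfl fun pr hpr => ?_
    rw [(Finset.mem_filter.mp hpr).2]
  have hp1 : ∑ pr ∈ P, pr.1 * m (p ⁻¹' {pr.1} ∩ q ⁻¹' {pr.2}) = integ m p := by
    rw [hP, Finset.sum_product]
    rw [integ, dif_pos hp.1]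
    refine Finset.sum_congr rfl fun r _ => ?_
    rw [← Finset.mul_sum]
    congr 1
    rw [← m_sum hm Sq (fun s => p ⁻¹' {r} ∩ q ⁻¹' {s}) ?_]
    · congr 1
      ext x
      simp only [Set.mem_iUnion, Set.mem_inter_iff, Set.mem_preimage, Set.mem_singleton_iff]
      exact ⟨fun ⟨s, _, hx, _⟩ => hx, fun hx => ⟨q x, hmemq x, hx, rfl⟩⟩
    · intro i _ j _ hij
      refine Set.disjoint_left.mpr fun x hx hx' => hij ?_
      exact hx.2.symm.trans hx'.2
  have hq1 : ∑ pr ∈ P, pr.2 * m (p ⁻¹' {pr.1} ∩ q ⁻¹' {pr.2}) = integ m q := by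
    rw [hP, Finset.sum_product_right]
    rw [integ, dif_pos hq.1]
    refine Finset.sum_congr rfl fun s _ => ?_
    rw [← Finset.mul_sum]
    congr 1
    rw [← m_sum hm Sp (fun r => p ⁻¹' {r} ∩ q ⁻¹' {s}) ?_]
    · congr 1
      ext x
      simp only [Set.mem_iUnion, Set.mem_inter_iff, Set.mem_preimage, Set.mem_singleton_iff]
      exact ⟨fun ⟨r, _, _, hx⟩ => hx, fun hx => ⟨p x, hmemp x, rfl, hx⟩⟩
    · intro i _ j _ hij
      refine Set.disjoint_left.mpr fun x hx hx' => hij ?_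
      exact hx.1.symm.trans hx'.1
  rw [h3, ← hp1, ← hq1, ← Finset.sum_add_distrib]
  exact Finset.sum_congr rfl fun pr _ => by ring


lemma indicator_simple (U : Set X) : IsSimple (Set.indicator U (fun _ => (1:ℝ))) := by
  constructor
  · exact ((Set.finite_singleton (1:ℝ)).insert 0).subset (by
      rintro r ⟨x, rfl⟩
      by_cases hx : x ∈ U <;> simp [Set.indicator, hx])
  · intro x; by_cases hx : x ∈ U <;> simp [Set.indicator, hx]

lemma simple_zero : IsSimple (fun _ : X => (0:ℝ)) := by
  constructor
  · exact (Set.finite_singleton 0).subset (by rintro r ⟨x, rfl⟩; simp)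
  · intro x; simp

lemma state_zero {h : (X → ℝ) → ℝ} (hh : IsSimpleState h) : h (fun _ => 0) = 0 := by
  have := hh.smul 0 (fun _ => 0) ⟨le_refl 0, zero_le_one⟩ simple_zero
  simpa using this

lemma sum_ind_eval {ι : Type*} (s : Finset ι) (r : ι → ℝ) (U : ι → Set X)
    (hd : ∀ i ∈ s, ∀ j ∈ s, i ≠ j → Disjoint (U i) (U j)) (x : X) :
    (∑ i ∈ s, r i * (U i).indicator (fun _ => (1:ℝ)) x) = 0 ∨
    ∃ j ∈ s, x ∈ U j ∧ (∑ i ∈ s, r i * (U i).indicator (fun _ => (1:ℝ)) x) = r j := by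
  classical
  by_cases hx : ∃ j ∈ s, x ∈ U j
  · obtain ⟨j, hj, hxj⟩ := hx
    refine Or.inr ⟨j, hj, hxj, ?_⟩
    rw [Finset.sum_eq_single j ?_ (fun hj' => absurd hj hj')]
    · simp [Set.indicator, hxj]
    · intro b hb hbj
      have : x ∉ U b := Set.disjoint_left.mp (hd j hj b hb (Ne.symm hbj)) hxj
      simp [Set.indicator, this]
  · refine Or.inl (Finset.sum_eq_zero fun i hi => ?_)
    have : x ∉ U i := fun hxi => hx ⟨i, hi, hxi⟩
    simp [Set.indicator, this]

lemma sum_ind_simple {ι : Type*} (s : Finset ι) (r : ι → ℝ) (U : ι → Set X)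
    (hr : ∀ i ∈ s, r i ∈ Set.Icc (0:ℝ) 1)
    (hd : ∀ i ∈ s, ∀ j ∈ s, i ≠ j → Disjoint (U i) (U j)) :
    IsSimple (fun x => ∑ i ∈ s, r i * (U i).indicator (fun _ => (1:ℝ)) x) := by
  constructor
  · refine ((s.image r).finite_toSet.insert 0).subset ?_
    rintro t ⟨x, rfl⟩
    dsimp only
    rcases sum_ind_eval s r U hd x with hv | ⟨j, hj, _, hv⟩
    · rw [hv]; exact Set.mem_insert 0 _
    · rw [hv]; exact Set.mem_insert_of_mem _ (Finset.mem_coe.mpr (Finset.mem_image.mpr ⟨j, hj, rfl⟩))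
  · intro x
    dsimp only
    rcases sum_ind_eval s r U hd x with hv | ⟨j, hj, _, hv⟩
    · rw [hv]; exact ⟨le_refl 0, zero_le_one⟩
    · rw [hv]; exact hr j hj

lemma state_sum {h : (X → ℝ) → ℝ} (hh : IsSimpleState h) {ι : Type*} (s : Finset ι)
    (r : ι → ℝ) (U : ι → Set X)
    (hr : ∀ i ∈ s, r i ∈ Set.Icc (0:ℝ) 1)
    (hd : ∀ i ∈ s, ∀ j ∈ s, i ≠ j → Disjoint (U i) (U j)) :
    h (fun x => ∑ i ∈ s, r i * (U i).indicator (fun _ => (1:ℝ)) x)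
      = ∑ i ∈ s, r i * h ((U i).indicator (fun _ => (1:ℝ))) := by
  classical
  induction s using Finset.induction_on with
  | empty => simpa using state_zero hh
  | @insert a t ha ih =>
    have has : a ∈ insert a t := Finset.mem_insert_self a t
    have hrt : ∀ i ∈ t, r i ∈ Set.Icc (0:ℝ) 1 :=
      fun i hi => hr i (Finset.mem_insert_of_mem hi)
    have hdt : ∀ i ∈ t, ∀ j ∈ t, i ≠ j → Disjoint (U i) (U j) :=
      fun i hi j hj hij =>
        hd i (Finset.mem_insert_of_mem hi) j (Finset.mem_insert_of_mem hj) hij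
    have htail : IsSimple (fun x => ∑ i ∈ t, r i * (U i).indicator (fun _ => (1:ℝ)) x) :=
      sum_ind_simple t r U hrt hdt
    have hhead : IsSimple (fun x => r a * (U a).indicator (fun _ => (1:ℝ)) x) := by
      constructor
      · refine ((Set.finite_singleton (r a)).insert 0).subset ?_
        rintro v ⟨x, rfl⟩
        by_cases hx : x ∈ U a <;> simp [Set.indicator, hx]
      · intro x
        by_cases hx : x ∈ U a <;> simp only [Set.indicator, hx, if_pos, if_neg, mul_one, mul_zero]
        · simpa using hr a has
        · simp
    have hbound : ∀ x, (fun x => r a * (U a).indicator (fun _ => (1:ℝ)) x) x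
        + (fun x => ∑ i ∈ t, r i * (U i).indicator (fun _ => (1:ℝ)) x) x ≤ 1 := by
      intro x
      by_cases hx : x ∈ U a
      · have htz : (∑ i ∈ t, r i * (U i).indicator (fun _ => (1:ℝ)) x) = 0 := by
          refine Finset.sum_eq_zero fun i hi => ?_
          have hia : a ≠ i := by rintro rfl; exact ha hi
          have : x ∉ U i :=
            Set.disjoint_left.mp (hd a has i (Finset.mem_insert_of_mem hi) hia) hx
          simp [Set.indicator, this]
        dsimp only
        rw [htz, add_zero, Set.indicator_of_mem hx, mul_one]
        exact (hr a has).2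
      · dsimp only
        rw [Set.indicator_of_notMem hx, mul_zero, zero_add]
        exact (htail.2 x).2
    have key := hh.add _ _ hhead htail hbound
    have hgoal : (fun x => ∑ i ∈ insert a t, r i * (U i).indicator (fun _ => (1:ℝ)) x)
        = (fun x => r a * (U a).indicator (fun _ => (1:ℝ)) x
            + ∑ i ∈ t, r i * (U i).indicator (fun _ => (1:ℝ)) x) := by
      funext x; rw [Finset.sum_insert ha]
    rw [hgoal, key, Finset.sum_insert ha, ih hrt hdt,
      hh.smul (r a) _ (hr a has) (indicator_simple (U a))]

lemma simple_decomp {q : X → ℝ} (hq : IsSimple q) :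
    q = fun x => ∑ r ∈ hq.1.toFinset, r * ((q ⁻¹' {r}).indicator (fun _ => (1:ℝ))) x := by
  classical
  funext x
  rw [Finset.sum_eq_single (q x) ?_ ?_]
  · simp [Set.indicator]
  · intro b _ hbq
    have : x ∉ q ⁻¹' {b} := by simp [Ne.symm hbq]
    simp [Set.indicator, this]
  · intro hmem
    exact absurd (hq.1.mem_toFinset.mpr ⟨x, rfl⟩) hmem

end AuxLemmas

/-- Finitely additive measures on the Boolean algebra `𝒫(X)` correspond bijectively to
states on the simple `[0,1]`-valued functions, via
`m ↦ (⊎ᵢ rᵢ·𝟙_{Uᵢ} ↦ Σᵢ rᵢ·m(Uᵢ))`; in particular this assignment is well defined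
(independent of the chosen partition representation). -/
theorem finAddMeasures_biject_simple_states {X : Type*} :
    -- existence and well-definedness of the induced state `ĥ`
    (∀ m : Set X → ℝ, IsFinAddMeasure m →
      ∃ h : (X → ℝ) → ℝ, IsSimpleState h ∧
        ∀ (n : ℕ) (r : Fin n → ℝ) (U : Fin n → Set X),
          (∀ i, r i ∈ Set.Icc (0:ℝ) 1) →
          (∀ i j, i ≠ j → Disjoint (U i) (U j)) →
          (⋃ i, U i) = Set.univ →
          h (fun x => ∑ i, r i * Set.indicator (U i) (fun _ => (1:ℝ)) x)
            = ∑ i, r i * m (U i)) ∧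
    -- states agreeing on indicators agree on all simple functions (injectivity)
    (∀ h h' : (X → ℝ) → ℝ, IsSimpleState h → IsSimpleState h' →
      (∀ U : Set X, h (Set.indicator U (fun _ => 1)) = h' (Set.indicator U (fun _ => 1))) →
      ∀ q : X → ℝ, IsSimple q → h q = h' q) ∧
    -- every state on simple functions comes from a finitely additive measure (surjectivity)
    (∀ h : (X → ℝ) → ℝ, IsSimpleState h →
      ∃ m : Set X → ℝ, IsFinAddMeasure m ∧
        ∀ U : Set X, h (Set.indicator U (fun _ => 1)) = m U) := by
  classical
  refine ⟨?_, ?_, ?_⟩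
  · -- Part 1: existence and well-definedness
    intro m hm
    set h : (X → ℝ) → ℝ := fun q => if _ : IsSimple q then integ m q else 0 with hdef
    have hind : ∀ U : Set X, h (Set.indicator U (fun _ => (1:ℝ))) = m U := by
      intro U
      rw [hdef]
      simp only [dif_pos (indicator_simple U)]
      exact integ_indicator hm U
    have hstate : IsSimpleState h := by
      constructor
      · have h1 : IsSimple (fun _ : X => (1:ℝ)) := by
          constructor
          · exact (Set.finite_singleton 1).subset (by rintro t ⟨x, rfl⟩; simp)
          · intro x; simp
        rw [hdef]; simp only [dif_pos h1]; exact integ_one hm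
      · intro p hp; rw [hdef]; simp only [dif_pos hp]; exact integ_mem hm hp
      · intro p q hp hq hb
        have hpq : IsSimple (fun x => p x + q x) := by
          constructor
          · refine (Set.Finite.image2 (· + ·) hp.1 hq.1).subset ?_
            rintro t ⟨x, rfl⟩
            exact ⟨p x, ⟨x, rfl⟩, q x, ⟨x, rfl⟩, rfl⟩
          · intro x; exact ⟨add_nonneg (hp.2 x).1 (hq.2 x).1, hb x⟩
        rw [hdef]; simp only [dif_pos hpq, dif_pos hp, dif_pos hq]
        exact integ_add hm hp hq
      · intro r p hr hp
        have hrp : IsSimple (fun x => r * p x) := by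
          constructor
          · refine (hp.1.image (r * ·)).subset ?_
            rintro t ⟨x, rfl⟩
            exact ⟨p x, ⟨x, rfl⟩, rfl⟩
          · intro x
            exact ⟨mul_nonneg hr.1 (hp.2 x).1, mul_le_one₀ hr.2 (hp.2 x).1 (hp.2 x).2⟩
        rw [hdef]; simp only [dif_pos hrp, dif_pos hp]
        exact integ_smul hm r hr hp
    refine ⟨h, hstate, ?_⟩
    intro n r U hrI hd _
    have e := state_sum hstate (Finset.univ : Finset (Fin n)) r U
      (fun i _ => hrI i) (fun i _ j _ hij => hd i j hij)
    rw [e]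
    exact Finset.sum_congr rfl fun i _ => by rw [hind (U i)]
  · -- Part 2: injectivity
    intro h h' hh hh' hind q hq
    have hrS : ∀ t ∈ hq.1.toFinset, t ∈ Set.Icc (0:ℝ) 1 := by
      intro t ht
      obtain ⟨x, rfl⟩ := hq.1.mem_toFinset.mp ht
      exact hq.2 x
    have hdS : ∀ t ∈ hq.1.toFinset, ∀ u ∈ hq.1.toFinset, t ≠ u →
        Disjoint (q ⁻¹' {t}) (q ⁻¹' {u}) := by
      intro t _ u _ htu
      exact Set.disjoint_left.mpr fun x hx hx' => htu (hx.symm.trans hx')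
    have key : ∀ g : (X → ℝ) → ℝ, IsSimpleState g →
        g q = ∑ t ∈ hq.1.toFinset, t * g ((q ⁻¹' {t}).indicator (fun _ => (1:ℝ))) := by
      intro g hg
      conv_lhs => rw [simple_decomp hq]
      exact state_sum hg hq.1.toFinset (fun t => t) (fun t => q ⁻¹' {t}) hrS hdS
    rw [key h hh, key h' hh']
    exact Finset.sum_congr rfl fun t _ => by rw [hind]
  · -- Part 3: surjectivity
    intro h hh
    refine ⟨fun U => h (Set.indicator U (fun _ => 1)), ⟨?_, ?_, ?_⟩, fun U => rfl⟩
    · show h (Set.indicator Set.univ (fun _ => 1)) = 1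
      rw [Set.indicator_univ]; exact hh.map_one
    · intro U; exact hh.mem _ (indicator_simple U)
    · intro U V hUV
      have hb : ∀ x, (Set.indicator U (fun _ => (1:ℝ))) x
          + (Set.indicator V (fun _ => (1:ℝ))) x ≤ 1 := by
        intro x
        by_cases hx : x ∈ U
        · have hxv : x ∉ V := Set.disjoint_left.mp hUV hx
          simp [Set.indicator, hx, hxv]
        · by_cases hxv : x ∈ V <;> simp [Set.indicator, hx, hxv]
      have hadd := hh.add _ _ (indicator_simple U) (indicator_simple V) hb
      show h (Set.indicator (U ∪ V) (fun _ => 1)) = _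
      rw [← hadd]
      congr 1
      funext x
      rw [Set.indicator_union_of_disjoint hUV]
end
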